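/- Let 0 < q < 1/2 and let f be a solution of Schilling's problem. If f is bounded on a neighbourhood of ε·∑_{i=1}^{n} qⁱ for some nonnegative integer n and some ε ∈ {-1,1}, then f(x) = 0 for all x with |x| < 1 - Q. -/

import Mathlib

/-!
Outside `[-Q, Q]` a solution vanishes, so the functional equation collapses: for `|x| < 1 - Q`
it reads `f x = 2q f(qx)`, and for `z > Q - 1` it reads `f z = 4q f(q(z + 1))`. The partial
sums `S_k = ∑_{i=1}^k qⁱ` satisfy `S_{k+1} = q(S_k + 1)`, so boundedness near `S_n` propagates
back to boundedness near `S_0 = 0`. Iterating the first identity gives `f x = (2q)ᵏ f(qᵏ x)`, where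
`(2q)ᵏ → 0` while `f(qᵏ x)` stays bounded, hence `f x = 0`. The reflection `x ↦ -x` maps
solutions to solutions and reduces the case `ε = -1` to `ε = 1`.
-/

open Filter Topology

theorem Finset.sum_Icc_one_pow_succ {R : Type*} [CommSemiring R] (q : R) (n : ℕ) :
    ∑ i ∈ Icc 1 (n + 1), q ^ i = q * (∑ i ∈ Icc 1 n, q ^ i + 1) := by
  induction n with
  | zero => simp
  | succ n ih =>
    nth_rw 1 [sum_Icc_succ_top (by omega : 1 ≤ n + 2)]
    nth_rw 2 [sum_Icc_succ_top (by omega : 1 ≤ n + 1)]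
    rw [ih]
    ring

structure IsSchillingSolution (q : ℝ) (f : ℝ → ℝ) : Prop where
  apply_mul : ∀ x, f (q * x) = 1 / (4 * q) * (f (x - 1) + f (x + 1) + 2 * f x)
  eq_zero_of_lt_abs : ∀ x, q / (1 - q) < |x| → f x = 0

namespace IsSchillingSolution

variable {q : ℝ} {f : ℝ → ℝ}

theorem comp_neg (hf : IsSchillingSolution q f) : IsSchillingSolution q (fun x => f (-x)) where
  apply_mul x := by
    rw [← mul_neg, hf.apply_mul]
    ring_nf
  eq_zero_of_lt_abs x hx := hf.eq_zero_of_lt_abs (-x) (by rwa [abs_neg])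

theorem eq_four_mul_apply_mul_add_one (hf : IsSchillingSolution q f) (hq : q ≠ 0) {z : ℝ}
    (hz : q / (1 - q) - 1 < z) : f z = 4 * q * f (q * (z + 1)) := by
  have h₁ : f (z + 1) = 0 :=
    hf.eq_zero_of_lt_abs _ ((by linarith : q / (1 - q) < z + 1).trans_le (le_abs_self _))
  have h₂ : f (z + 1 + 1) = 0 :=
    hf.eq_zero_of_lt_abs _ ((by linarith : q / (1 - q) < z + 1 + 1).trans_le (le_abs_self _))
  rw [hf.apply_mul, add_sub_cancel_right, h₁, h₂]
  field_simp
  ring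

theorem eq_two_mul_apply_mul (hf : IsSchillingSolution q f) (hq : q ≠ 0) {y : ℝ}
    (hy : |y| < 1 - q / (1 - q)) : f y = 2 * q * f (q * y) := by
  obtain ⟨hy₁, hy₂⟩ := abs_lt.mp hy
  have h₁ : f (y - 1) = 0 :=
    hf.eq_zero_of_lt_abs _ ((by linarith : q / (1 - q) < -(y - 1)).trans_le (neg_le_abs _))
  have h₂ : f (y + 1) = 0 :=
    hf.eq_zero_of_lt_abs _ ((by linarith : q / (1 - q) < y + 1).trans_le (le_abs_self _))
  rw [hf.apply_mul, h₁, h₂]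
  field_simp
  ring

theorem eq_pow_mul_apply_pow_mul (hf : IsSchillingSolution q f) (hq : 0 < q) (hq1 : q ≤ 1)
    {y : ℝ} (hy : |y| < 1 - q / (1 - q)) (k : ℕ) : f y = (2 * q) ^ k * f (q ^ k * y) := by
  induction k with
  | zero => simp
  | succ k ih =>
    have hk : |q ^ k * y| < 1 - q / (1 - q) := by
      rw [abs_mul, abs_of_pos (pow_pos hq k)]
      exact (mul_le_of_le_one_left (abs_nonneg y) (pow_le_one₀ hq.le hq1)).trans_lt hy
    rw [ih, hf.eq_two_mul_apply_mul hq.ne' hk, pow_succ, pow_succ', mul_assoc q]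
    ring

theorem eq_zero_of_isBoundedUnder_nhds_zero (hf : IsSchillingSolution q f) (hq : 0 < q)
    (hq1 : q < 1 / 2) (hb : IsBoundedUnder (· ≤ ·) (𝓝 0) (norm ∘ f)) {x : ℝ}
    (hx : |x| < 1 - q / (1 - q)) : f x = 0 := by
  have hpow : Tendsto (fun k : ℕ => q ^ k * x) atTop (𝓝 0) := by
    simpa using (tendsto_pow_atTop_nhds_zero_of_lt_one hq.le (by linarith)).mul_const x
  have h2q : Tendsto (fun k : ℕ => (2 * q) ^ k) atTop (𝓝 0) :=
    tendsto_pow_atTop_nhds_zero_of_lt_one (by positivity) (by linarith)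
  have hlim : Tendsto (fun k : ℕ => (2 * q) ^ k * f (q ^ k * x)) atTop (𝓝 0) :=
    h2q.zero_mul_isBoundedUnder_le (hpow.isBoundedUnder_comp hb)
  simp_rw [← hf.eq_pow_mul_apply_pow_mul hq (by linarith) hx] at hlim
  exact tendsto_const_nhds_iff.mp hlim

theorem isBoundedUnder_nhds_of_mul_add_one (hf : IsSchillingSolution q f) (hq : q ≠ 0) {a : ℝ}
    (ha : q / (1 - q) - 1 < a) (hb : IsBoundedUnder (· ≤ ·) (𝓝 (q * (a + 1))) (norm ∘ f)) :
    IsBoundedUnder (· ≤ ·) (𝓝 a) (norm ∘ f) := by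
  have hφ : Tendsto (fun z => q * (z + 1)) (𝓝 a) (𝓝 (q * (a + 1))) :=
    ((continuous_add_const 1).const_mul q).tendsto a
  obtain ⟨M, hM⟩ := (hφ.isBoundedUnder_comp hb).eventually_le
  refine isBoundedUnder_of_eventually_le (a := ‖4 * q‖ * M) ?_
  filter_upwards [hM, eventually_gt_nhds ha] with z hMz hz
  rw [Function.comp_apply, hf.eq_four_mul_apply_mul_add_one hq hz, norm_mul]
  exact mul_le_mul_of_nonneg_left hMz (norm_nonneg _)

theorem isBoundedUnder_nhds_zero_of_sum (hf : IsSchillingSolution q f) (hq : 0 < q)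
    (hq1 : q < 1 / 2) (n : ℕ)
    (hb : IsBoundedUnder (· ≤ ·) (𝓝 (∑ i ∈ Finset.Icc 1 n, q ^ i)) (norm ∘ f)) :
    IsBoundedUnder (· ≤ ·) (𝓝 0) (norm ∘ f) := by
  induction n with
  | zero => simpa using hb
  | succ n ih =>
    refine ih (hf.isBoundedUnder_nhds_of_mul_add_one hq.ne' ?_ ?_)
    · have hQ : q / (1 - q) < 1 := by rw [div_lt_one (by linarith)]; linarith
      have hS : 0 ≤ ∑ i ∈ Finset.Icc 1 n, q ^ i := by positivity
      linarith
    · rwa [← Finset.sum_Icc_one_pow_succ]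

theorem eq_zero_of_isBoundedUnder_nhds_sum (hf : IsSchillingSolution q f) (hq : 0 < q)
    (hq1 : q < 1 / 2) {ε : ℝ} (hε : ε = -1 ∨ ε = 1) (n : ℕ)
    (hb : IsBoundedUnder (· ≤ ·) (𝓝 (ε * ∑ i ∈ Finset.Icc 1 n, q ^ i)) (norm ∘ f)) {x : ℝ}
    (hx : |x| < 1 - q / (1 - q)) : f x = 0 := by
  set S := ∑ i ∈ Finset.Icc 1 n, q ^ i
  rcases hε with rfl | rfl
  · have hb' := (continuous_neg.tendsto' S (-1 * S) (by ring)).isBoundedUnder_comp hb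
    simpa using hf.comp_neg.eq_zero_of_isBoundedUnder_nhds_zero hq hq1
      (hf.comp_neg.isBoundedUnder_nhds_zero_of_sum hq hq1 n hb') (x := -x) (by rwa [abs_neg])
  · exact hf.eq_zero_of_isBoundedUnder_nhds_zero hq hq1
      (hf.isBoundedUnder_nhds_zero_of_sum hq hq1 n (by simpa using hb)) hx

end IsSchillingSolution

theorem schilling_bounded_vanish (q : ℝ) (hq : 0 < q) (hq1 : q < 1 / 2)
    (f : ℝ → ℝ)
    (heq : ∀ x : ℝ, f (q * x) = 1 / (4 * q) * (f (x - 1) + f (x + 1) + 2 * f x))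
    (hQ : ∀ x : ℝ, |x| > q / (1 - q) → f x = 0)
    (n : ℕ) (ε : ℝ) (hε : ε = -1 ∨ ε = 1)
    (hbdd : ∃ δ > 0, ∃ M : ℝ, ∀ x : ℝ,
      |x - ε * ∑ i ∈ Finset.Icc 1 n, q ^ i| < δ → |f x| ≤ M) :
    ∀ x : ℝ, |x| < 1 - q / (1 - q) → f x = 0 := by
  obtain ⟨δ, hδ, M, hM⟩ := hbdd
  have hb : IsBoundedUnder (· ≤ ·) (𝓝 (ε * ∑ i ∈ Finset.Icc 1 n, q ^ i)) (norm ∘ f) :=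
    isBoundedUnder_of_eventually_le (Metric.eventually_nhds_iff.mpr ⟨δ, hδ, fun x => hM x⟩)
  exact fun x hx =>
    IsSchillingSolution.eq_zero_of_isBoundedUnder_nhds_sum ⟨heq, hQ⟩ hq hq1 hε n hb hx
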